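/- arXiv:2512.05376 — 7 statements merged into one kernel-verified Lean document; each statement's English description precedes it below -/
import Mathlib

section
/- Let G be a connected finite simple graph with n vertices. For any integer k with 1 ≤ k ≤ n, the number of connected induced subgraphs of G with exactly k vertices is at least ⌈n/k⌉. -/
/-!
Every vertex `v` lies in a connected induced subgraph on exactly `k` vertices: start from `{v}`
and, while the current vertex set `s` is not everything, add an outside neighbour of `s`, which
exists because `G` is connected. These sets cover all `n` vertices and each has `k` of them, so
there are at least `n / k` of them.
-/

open Finset

namespace SimpleGraph

variable {V : Type*} {G : SimpleGraph V}

lemma Preconnected.exists_connected_induce_insert [DecidableEq V] (hG : G.Preconnected)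
    {s : Finset V} (hs : (G.induce (s : Set V)).Connected) {u : V} (hu : u ∉ s) :
    ∃ w ∉ s, (G.induce (insert w s : Finset V)).Connected := by
  obtain ⟨v, hv⟩ := hs.nonempty
  obtain ⟨d, -, hd_in, hd_out⟩ := (hG v u).some.exists_boundary_dart (s : Set V) hv hu
  refine ⟨d.snd, hd_out, ?_⟩
  rw [coe_insert, Set.insert_eq]
  exact connected_induce_union .of_subsingleton hs.preconnected rfl hd_in d.adj.symm

lemma Preconnected.exists_connected_induce_card_eq [Fintype V] (hG : G.Preconnected) (v : V)
    {k : ℕ} (hk1 : 1 ≤ k) (hk2 : k ≤ Fintype.card V) :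
    ∃ s : Finset V, v ∈ s ∧ #s = k ∧ (G.induce (s : Set V)).Connected := by
  classical
  induction k, hk1 using Nat.le_induction with
  | base => exact ⟨{v}, mem_singleton_self v, card_singleton v, by rw [coe_singleton]; simp⟩
  | succ k _ ih =>
    obtain ⟨s, hvs, hcard, hconn⟩ := ih (by omega)
    have hs_ne : s ≠ univ := (card_lt_iff_ne_univ s).mp (by omega)
    obtain ⟨u, -, hu⟩ := exists_of_ssubset (ssubset_univ_iff.mpr hs_ne)
    obtain ⟨w, hw, hconn'⟩ := hG.exists_connected_induce_insert hconn hu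
    exact ⟨insert w s, mem_insert_of_mem hvs, by rw [card_insert_of_notMem hw, hcard], hconn'⟩

end SimpleGraph

lemma Finset.card_univ_le_card_mul_of_cover {α : Type*} [Fintype α] (T : Finset (Finset α))
    {k : ℕ} (hT : ∀ s ∈ T, #s = k) (hcover : ∀ a, ∃ s ∈ T, a ∈ s) :
    Fintype.card α ≤ #T * k := by
  classical
  calc Fintype.card α = #(univ : Finset α) := card_univ.symm
    _ ≤ #(T.biUnion id) := card_le_card fun a _ ↦ by simpa using hcover a
    _ ≤ #T * k := card_biUnion_le_card_mul _ _ _ fun s hs ↦ (hT s hs).le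

/-- A connected graph on `n` vertices has at least `⌈n/k⌉` connected induced
subgraphs with exactly `k` vertices, for every `1 ≤ k ≤ n`. -/
theorem count_connected_induced_subgraphs {V : Type*} [Fintype V] (G : SimpleGraph V)
    (hG : G.Connected) (k : ℕ) (hk1 : 1 ≤ k) (hk2 : k ≤ Fintype.card V) :
    ⌈(Fintype.card V : ℚ) / (k : ℚ)⌉ ≤
      ({s : Finset V | s.card = k ∧ (G.induce (↑s : Set V)).Connected}.ncard : ℤ) := by
  classical
  set T := univ.filter fun s : Finset V ↦ #s = k ∧ (G.induce (s : Set V)).Connected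
  have hncard : {s : Finset V | #s = k ∧ (G.induce (s : Set V)).Connected}.ncard = #T := by
    rw [Set.ncard_eq_toFinset_card', Set.toFinset_ofPred]
  have hcount : Fintype.card V ≤ #T * k := by
    refine card_univ_le_card_mul_of_cover T (fun s hs ↦ (mem_filter.mp hs).2.1) fun v ↦ ?_
    obtain ⟨s, hvs, hs⟩ := hG.preconnected.exists_connected_induce_card_eq v hk1 hk2
    exact ⟨s, mem_filter.mpr ⟨mem_univ s, hs⟩, hvs⟩
  rw [hncard, Int.ceil_le]
  exact div_le_of_le_mul₀ k.cast_nonneg (by positivity) (by exact_mod_cast hcount)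
end

section
/- Let S = k[x_1,…,x_{t+1}] be a polynomial ring over a field k, and let I be a squarefree monomial ideal minimally generated by n ≥ 3 squarefree monomials, each of degree t. Then the Scarf complex of I consists exactly of the empty face and the n singleton faces; in particular, no face of cardinality at least 2 belongs to the Scarf complex. -/
/-- A subset `σ` of the minimal generating set `M` (squarefree monomials identified with their
sets of variables, lcm identified with union) is a face of the Scarf complex when its lcm is
unique among subsets of `M` (with `lcm ∅ = 1`, i.e. the empty set of variables). -/
def ScarfFace {α : Type*} [DecidableEq α] (M σ : Finset (Finset α)) : Prop :=
  σ ⊆ M ∧ ∀ τ ⊆ M, τ.sup id = σ.sup id → τ = σ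

/-!
Two distinct squarefree monomials of degree `t` in `t + 1` variables have lcm `x_1 ⋯ x_{t+1}`,
so every set of at least two generators has this same lcm; with a third generator `c` at
hand, the pairs `{m₁, m₂}` and `{m₁, c}` already share an lcm, so no face with two or more
elements is Scarf.
Conversely, generators of equal degree form an antichain under divisibility, which makes the
empty face and all singletons Scarf.
-/

namespace Finset

variable {α : Type*} [DecidableEq α]

theorem union_eq_univ_of_ne_of_card_add_one_eq [Fintype α] {a b : Finset α}
    (hcard : a.card = b.card) (ha : a.card + 1 = Fintype.card α) (hab : a ≠ b) :
    a ∪ b = univ := by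
  by_contra hne
  have hlt : (a ∪ b).card < a.card + 1 := by
    rw [ha, ← card_univ]
    exact card_lt_card (ssubset_univ_iff.mpr hne)
  have hunion : a ∪ b = a :=
    (eq_of_subset_of_card_le subset_union_left (Nat.lt_succ_iff.mp hlt)).symm
  have hba : b ⊆ a := hunion ▸ subset_union_right
  exact hab (eq_of_subset_of_card_le hba hcard.le).symm

theorem sup_id_eq_of_pairwise_union_eq {M τ : Finset (Finset α)} {u : Finset α}
    (hunion : ∀ a ∈ M, ∀ b ∈ M, a ≠ b → a ∪ b = u) (hτ : τ ⊆ M) (hcard : 1 < τ.card) :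
    τ.sup id = u := by
  apply le_antisymm
  · refine Finset.sup_le fun m hm => ?_
    obtain ⟨m', hm', hne⟩ := exists_mem_ne hcard m
    exact hunion m (hτ hm) m' (hτ hm') hne.symm ▸ subset_union_left
  · obtain ⟨a, b, ha, hb, hab⟩ := one_lt_card_iff.mp hcard
    exact hunion a (hτ ha) b (hτ hb) hab ▸
      union_subset (le_sup (f := id) ha) (le_sup (f := id) hb)

end Finset

theorem Set.Sized.empty_notMem {α : Type*} {M : Finset (Finset α)} {r : ℕ}
    (hM : (M : Set (Finset α)).Sized r) (hcard : 1 < M.card) : ∅ ∉ M := by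
  intro hempty
  have hr : r = 0 := (hM hempty).symm
  subst hr
  have := Finset.card_le_one.mpr fun a ha b hb => hM.subsingleton ha hb
  omega

open Finset

section ScarfFace

variable {α : Type*} [DecidableEq α] {M σ : Finset (Finset α)}

theorem scarfFace_empty (hM : ∅ ∉ M) : ScarfFace M ∅ := by
  refine ⟨empty_subset M, fun τ hτ hsup => eq_empty_iff_forall_notMem.mpr fun m hm => ?_⟩
  rw [sup_empty] at hsup
  have hm_empty : m ≤ ⊥ := hsup ▸ le_sup (f := id) hm
  rw [le_bot_iff, bot_eq_empty] at hm_empty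
  exact hM (hm_empty ▸ hτ hm)

theorem scarfFace_singleton (hanti : IsAntichain (· ⊆ ·) (M : Set (Finset α)))
    (hM : ∅ ∉ M) {m : Finset α} (hm : m ∈ M) : ScarfFace M {m} := by
  refine ⟨singleton_subset_iff.mpr hm, fun τ hτ hsup => ?_⟩
  rw [sup_singleton, id] at hsup
  have hτm : τ ⊆ {m} := fun m' hm' =>
    mem_singleton.mpr (hanti.eq (hτ hm') hm (hsup ▸ le_sup (f := id) hm'))
  rcases subset_singleton_iff.mp hτm with rfl | rfl
  · rw [sup_empty, bot_eq_empty] at hsup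
    exact absurd (hsup ▸ hm) hM
  · rfl

theorem ScarfFace.card_le_one {u : Finset α} (hM : 3 ≤ M.card)
    (hunion : ∀ a ∈ M, ∀ b ∈ M, a ≠ b → a ∪ b = u) (hσ : ScarfFace M σ) : σ.card ≤ 1 := by
  by_contra! hcard
  obtain ⟨m₁, m₂, hm₁, hm₂, hne⟩ := one_lt_card_iff.mp hcard
  have hpair : ∀ {a b}, a ∈ M → b ∈ M → a ≠ b → ({a, b} : Finset (Finset α)) = σ :=
    fun ha hb hab => hσ.2 _ (insert_subset ha (singleton_subset_iff.mpr hb)) <| by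
      rw [sup_id_eq_of_pairwise_union_eq hunion hσ.1 hcard, sup_insert, sup_singleton]
      exact hunion _ ha _ hb hab
  have hσM : {m₁, m₂} ⊆ M := insert_subset (hσ.1 hm₁) (singleton_subset_iff.mpr (hσ.1 hm₂))
  obtain ⟨c, hc⟩ : (M \ {m₁, m₂}).Nonempty := by
    rw [← card_pos, card_sdiff_of_subset hσM, card_pair hne]
    omega
  obtain ⟨hcM, hc_notMem⟩ := mem_sdiff.mp hc
  have hc₁ : m₁ ≠ c := fun h => hc_notMem (h ▸ mem_insert_self _ _)
  have hcσ : c ∈ σ := hpair (hσ.1 hm₁) hcM hc₁ ▸ mem_insert_of_mem (mem_singleton_self c)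
  exact hc_notMem (hpair (hσ.1 hm₁) (hσ.1 hm₂) hne ▸ hcσ)

end ScarfFace

theorem scarf_of_degree_t_in_t_plus_one_vars_general {t n : ℕ} (hn : 3 ≤ n)
    (M : Finset (Finset (Fin (t + 1)))) (hM : M.card = n)
    (hdeg : ∀ m ∈ M, m.card = t) (σ : Finset (Finset (Fin (t + 1)))) :
    ScarfFace M σ ↔ (σ = ∅ ∨ ∃ m ∈ M, σ = {m}) := by
  have hsized : (M : Set (Finset (Fin (t + 1)))).Sized t := hdeg
  have hempty : ∅ ∉ M := hsized.empty_notMem (by omega)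
  have hunion : ∀ a ∈ M, ∀ b ∈ M, a ≠ b → a ∪ b = univ := fun a ha b hb =>
    union_eq_univ_of_ne_of_card_add_one_eq (by rw [hdeg a ha, hdeg b hb])
      (by rw [hdeg a ha, Fintype.card_fin])
  constructor
  · intro hσ
    obtain ⟨m, hm⟩ := card_le_one_iff_subset_singleton.mp (hσ.card_le_one (hM ▸ hn) hunion)
    rcases subset_singleton_iff.mp hm with rfl | rfl
    · exact Or.inl rfl
    · exact Or.inr ⟨m, hσ.1 (mem_singleton_self m), rfl⟩
  · rintro (rfl | ⟨m, hm, rfl⟩)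
    · exact scarfFace_empty hempty
    · exact scarfFace_singleton hsized.isAntichain hempty hm

/-- If `I ⊆ k[x_1,…,x_{t+1}]` is a squarefree monomial ideal minimally
generated by `n ≥ 3` squarefree monomials of degree `t`, then the Scarf complex of `I` consists
exactly of the empty face and the `n` singleton faces. -/
theorem scarf_of_degree_t_in_t_plus_one_vars {t n : ℕ} (hn : 3 ≤ n)
    (M : Finset (Finset (Fin (t + 1)))) (hM : M.card = n)
    (hdeg : ∀ m ∈ M, m.card = t) (σ : Finset (Finset (Fin (t + 1)))) (hσ : σ ⊆ M) :
    ScarfFace M σ ↔ (σ = ∅ ∨ ∃ m ∈ M, σ = {m}) :=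
  scarf_of_degree_t_in_t_plus_one_vars_general hn M hM hdeg σ
end

section
/- Let t ≥ 3 and t+2 ≤ r ≤ 2t, and let m_i = x_i ⋯ x_{i+t-1} for 1 ≤ i ≤ r−t+1 be the generators of C_t(P_r). Then the Scarf complex of C_t(P_r) consists exactly of the empty set, the singletons {m_i}, and the pairs {m_i, m_{i+1}} of consecutive generators; that is, the Scarf complex is a path on the vertices m_1,…,m_{r−t+1}. -/
open Finset Function

theorem scarfFace_image_iff {ι α : Type*} [DecidableEq α] {f : ι → Finset α}
    (hf : Injective f) {A S : Finset ι} :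
    ScarfFace (A.image f) (S.image f) ↔ S ⊆ A ∧ ∀ T ⊆ A, T.sup f = S.sup f → T = S := by
  rw [ScarfFace, image_subset_image_iff hf]
  refine and_congr_right fun _ => ⟨fun h T hT hsup => image_injective hf ?_, fun h τ hτ hsup => ?_⟩
  · exact h _ (image_subset_image hT) (by simpa only [sup_image, id_comp] using hsup)
  · obtain ⟨T, hT, rfl⟩ := subset_image_iff.mp hτ
    simp only [sup_image, id_comp] at hsup
    rw [h T hT hsup]

theorem Finset.subset_Icc_min'_max' {α : Type*} [LinearOrder α] [LocallyFiniteOrder α]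
    {S : Finset α} (hS : S.Nonempty) : S ⊆ Icc (S.min' hS) (S.max' hS) :=
  fun i hi => mem_Icc.mpr ⟨S.min'_le i hi, S.le_max' i hi⟩

theorem Finset.max'_le_min'_add_of_subset_Icc {S : Finset ℕ} {p q t : ℕ} (hS : S ⊆ Icc p q)
    (hq : q ≤ p + t) (hne : S.Nonempty) : S.max' hne ≤ S.min' hne + t := by
  have := mem_Icc.mp (hS (S.max'_mem hne))
  have := mem_Icc.mp (hS (S.min'_mem hne))
  omega

theorem Finset.eq_pair_of_subset_Icc {S : Finset ℕ} {a b : ℕ} (ha : a ∈ S) (hb : b ∈ S)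
    (hS : S ⊆ Icc a b) (hba : b ≤ a + 1) : S = {a, b} := by
  ext j
  simp only [mem_insert, mem_singleton]
  refine ⟨fun hj => ?_, by rintro (rfl | rfl) <;> assumption⟩
  have := mem_Icc.mp (hS hj)
  omega

/-- The variables `x_i, …, x_{i+t-1}` of the generator `m_i` of `C_t(P_r)`. -/
def window (t i : ℕ) : Finset ℕ := Icc i (i + t - 1)

variable {t : ℕ}

theorem window_injective (ht : 1 ≤ t) : Injective (window t) := by
  intro i j h
  have hi : i ∈ window t j := h ▸ mem_Icc.mpr ⟨le_rfl, by omega⟩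
  have hj : j ∈ window t i := h.symm ▸ mem_Icc.mpr ⟨le_rfl, by omega⟩
  rw [window, mem_Icc] at hi hj
  omega

theorem sup_window_eq_empty_iff (ht : 1 ≤ t) {S : Finset ℕ} : S.sup (window t) = ∅ ↔ S = ∅ := by
  refine ⟨fun h => ?_, by rintro rfl; rfl⟩
  rw [← bot_eq_empty, Finset.sup_eq_bot_iff] at h
  exact eq_empty_of_forall_notMem fun i hi =>
    (nonempty_Icc.mpr (by omega : i ≤ i + t - 1)).ne_empty (h i hi)

theorem sup_window_eq_Icc {S : Finset ℕ} {a b : ℕ} (ha : a ∈ S) (hb : b ∈ S) (hS : S ⊆ Icc a b)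
    (hspan : b ≤ a + t) : S.sup (window t) = Icc a (b + t - 1) := by
  ext x
  simp only [mem_sup, window, mem_Icc]
  constructor
  · rintro ⟨i, hi, hx⟩
    have := mem_Icc.mp (hS hi)
    omega
  · intro hx
    by_cases hxa : x ≤ a + t - 1
    · exact ⟨a, ha, by omega⟩
    · exact ⟨b, hb, by omega⟩

theorem extremes_of_sup_window_eq_Icc (ht : 1 ≤ t) {p : ℕ} {T : Finset ℕ}
    (hT : T ⊆ Icc p (p + t)) {a b : ℕ} (hab : a ≤ b) (h : T.sup (window t) = Icc a (b + t - 1)) :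
    a ∈ T ∧ b ∈ T ∧ T ⊆ Icc a b := by
  have hne : T.Nonempty := by
    rw [nonempty_iff_ne_empty, Ne, ← sup_window_eq_empty_iff ht, h]
    exact (nonempty_Icc.mpr (by omega)).ne_empty
  have hspan := max'_le_min'_add_of_subset_Icc hT le_rfl hne
  have hle : T.min' hne ≤ T.max' hne + t - 1 := by
    have := min'_le_max' T hne
    omega
  rw [sup_window_eq_Icc (T.min'_mem hne) (T.max'_mem hne) (subset_Icc_min'_max' hne) hspan,
    ← coe_inj, coe_Icc, coe_Icc, Set.Icc_eq_Icc_iff hle] at h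
  have hmin : T.min' hne = a := h.1
  have hmax : T.max' hne = b := by omega
  exact ⟨hmin ▸ T.min'_mem hne, hmax ▸ T.max'_mem hne, hmin ▸ hmax ▸ subset_Icc_min'_max' hne⟩

theorem max'_le_min'_add_one_of_unique_sup_window {p q : ℕ} (hq : q ≤ p + t) {S : Finset ℕ}
    (hS : S ⊆ Icc p q) (hne : S.Nonempty)
    (huniq : ∀ T ⊆ Icc p q, T.sup (window t) = S.sup (window t) → T = S) :
    S.max' hne ≤ S.min' hne + 1 := by
  set a := S.min' hne
  set b := S.max' hne
  have hab : a ≤ b := min'_le_max' S hne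
  have hspan : b ≤ a + t := max'_le_min'_add_of_subset_Icc hS hq hne
  have hsup : S.sup (window t) = Icc a (b + t - 1) :=
    sup_window_eq_Icc (S.min'_mem hne) (S.max'_mem hne) (subset_Icc_min'_max' hne) hspan
  by_contra! hba
  have hab1 : ({a, a + 1, b} : Finset ℕ) ⊆ Icc a b := by
    intro j hj
    simp only [mem_insert, mem_singleton] at hj
    rw [mem_Icc]
    omega
  have hpq : Icc a b ⊆ Icc p q := Icc_subset_Icc (mem_Icc.mp (hS (S.min'_mem hne))).1
    (mem_Icc.mp (hS (S.max'_mem hne))).2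
  have hextremes : ∀ T ⊆ ({a, a + 1, b} : Finset ℕ), a ∈ T → b ∈ T → T = S :=
    fun T hT ha hb => huniq T ((hT.trans hab1).trans hpq)
      (by rw [hsup, sup_window_eq_Icc ha hb (hT.trans hab1) hspan])
  have hpairs : ({a, b} : Finset ℕ) = {a, a + 1, b} :=
    (hextremes {a, b} (by intro j; simp; tauto) (by simp) (by simp)).trans
      (hextremes _ subset_rfl (by simp) (by simp)).symm
  have : a + 1 ∈ ({a, b} : Finset ℕ) := hpairs ▸ by simp
  simp only [mem_insert, mem_singleton] at this
  omega

theorem unique_sup_window_iff (ht : 1 ≤ t) {p q : ℕ} (hq : q ≤ p + t) {S : Finset ℕ}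
    (hS : S ⊆ Icc p q) :
    (∀ T ⊆ Icc p q, T.sup (window t) = S.sup (window t) → T = S) ↔
      S = ∅ ∨ (∃ i, p ≤ i ∧ i ≤ q ∧ S = {i}) ∨ (∃ i, p ≤ i ∧ i + 1 ≤ q ∧ S = {i, i + 1}) := by
  constructor
  · intro huniq
    rcases S.eq_empty_or_nonempty with rfl | hne
    · exact Or.inl rfl
    have hba := max'_le_min'_add_one_of_unique_sup_window hq hS hne huniq
    have hpair := eq_pair_of_subset_Icc (S.min'_mem hne) (S.max'_mem hne)
      (subset_Icc_min'_max' hne) hba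
    have hpmin := (mem_Icc.mp (hS (S.min'_mem hne))).1
    have hmaxq := (mem_Icc.mp (hS (S.max'_mem hne))).2
    have hab := min'_le_max' S hne
    rcases (by omega : S.max' hne = S.min' hne ∨ S.max' hne = S.min' hne + 1) with h | h
    · exact Or.inr <| Or.inl ⟨_, hpmin, by omega, hpair.trans (by rw [h, pair_eq_singleton])⟩
    · exact Or.inr <| Or.inr ⟨_, hpmin, by omega, hpair.trans (by rw [h])⟩
  · have hpq : Icc p q ⊆ Icc p (p + t) := Icc_subset_Icc_right hq
    rintro (rfl | ⟨i, -, -, rfl⟩ | ⟨i, -, -, rfl⟩) T hT hsup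
    · rwa [sup_empty, bot_eq_empty, sup_window_eq_empty_iff ht] at hsup
    · rw [sup_singleton] at hsup
      obtain ⟨hi, -, hTi⟩ := extremes_of_sup_window_eq_Icc ht (hT.trans hpq) le_rfl hsup
      rw [← pair_eq_singleton]
      exact eq_pair_of_subset_Icc hi hi hTi (by omega)
    · have hsup_pair : ({i, i + 1} : Finset ℕ).sup (window t) = Icc i (i + 1 + t - 1) :=
        sup_window_eq_Icc (by simp) (by simp)
          (by intro j hj; simp only [mem_insert, mem_singleton] at hj; rw [mem_Icc]; omega)
          (by omega)
      rw [hsup_pair] at hsup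
      obtain ⟨hi, hi1, hTi⟩ :=
        extremes_of_sup_window_eq_Icc ht (hT.trans hpq) (Nat.le_succ i) hsup
      exact eq_pair_of_subset_Icc hi hi1 hTi le_rfl

theorem scarf_connected_ideal_short_path_general (t r : ℕ) (ht : 3 ≤ t)
    (hr2 : r ≤ 2 * t)
    (M : Finset (Finset ℕ))
    (hM : M = (Finset.Icc 1 (r - t + 1)).image (fun i => Finset.Icc i (i + t - 1)))
    (σ : Finset (Finset ℕ)) (hσ : σ ⊆ M) :
    ScarfFace M σ ↔
      (σ = ∅ ∨
        (∃ i, 1 ≤ i ∧ i ≤ r - t + 1 ∧ σ = {Finset.Icc i (i + t - 1)}) ∨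
        (∃ i, 1 ≤ i ∧ i + 1 ≤ r - t + 1 ∧
          σ = {Finset.Icc i (i + t - 1), Finset.Icc (i + 1) (i + t)})) := by
  rw [show (fun i => Icc i (i + t - 1)) = window t from rfl] at hM
  subst hM
  obtain ⟨S, hS, rfl⟩ := subset_image_iff.mp hσ
  have ht1 : 1 ≤ t := by omega
  have hinj := image_injective (window_injective ht1)
  have hsingle (i : ℕ) : S.image (window t) = {Icc i (i + t - 1)} ↔ S = {i} := by
    rw [← hinj.eq_iff, image_singleton, window]
  have hpair (i : ℕ) :
      S.image (window t) = {Icc i (i + t - 1), Icc (i + 1) (i + t)} ↔ S = {i, i + 1} := by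
    rw [← hinj.eq_iff, image_insert, image_singleton, window, window,
      show i + 1 + t - 1 = i + t by omega]
  rw [scarfFace_image_iff (window_injective ht1), image_eq_empty, and_iff_right hS,
    unique_sup_window_iff ht1 (by omega) hS]
  simp only [hsingle, hpair]

/-- For `t ≥ 3` and `t+2 ≤ r ≤ 2t`, the Scarf complex of the `t`-connected
ideal of the path `P_r`, whose generators are `m_i = x_i ⋯ x_{i+t-1}` for `1 ≤ i ≤ r-t+1`
(identified with the intervals `[i, i+t-1]`), consists exactly of the empty set, the singletons,
and the pairs of consecutive generators: it is a path on `m_1, …, m_{r-t+1}`. -/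
theorem scarf_connected_ideal_short_path (t r : ℕ) (ht : 3 ≤ t)
    (hr1 : t + 2 ≤ r) (hr2 : r ≤ 2 * t)
    (M : Finset (Finset ℕ))
    (hM : M = (Finset.Icc 1 (r - t + 1)).image (fun i => Finset.Icc i (i + t - 1)))
    (σ : Finset (Finset ℕ)) (hσ : σ ⊆ M) :
    ScarfFace M σ ↔
      (σ = ∅ ∨
        (∃ i, 1 ≤ i ∧ i ≤ r - t + 1 ∧ σ = {Finset.Icc i (i + t - 1)}) ∨
        (∃ i, 1 ≤ i ∧ i + 1 ≤ r - t + 1 ∧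
          σ = {Finset.Icc i (i + t - 1), Finset.Icc (i + 1) (i + t)})) :=
  scarf_connected_ideal_short_path_general t r ht hr2 M hM σ hσ
end

section
/- Let t ≥ 3 and let m_i = x_i x_{i+1} ⋯ x_{i+t-1} for 1 ≤ i ≤ t+2 be the minimal generators of the t-connected ideal of the path P_{2t+1}. Then the Scarf complex of this ideal is the boundary of a (t+2)-gon: its faces are exactly the empty set, the singletons, the pairs {m_i, m_{i+1}} for 1 ≤ i ≤ t+1, and the pair {m_1, m_{t+2}}. -/
open Finset

section Scarf

variable {α ι : Type*} [DecidableEq α] [DecidableEq ι]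

theorem scarfFace_iff {M σ : Finset (Finset α)} :
    ScarfFace M σ ↔ σ ⊆ M ∧ (∀ m ∈ M, m ⊆ σ.sup id → m ∈ σ) ∧
      ∀ m ∈ σ, ¬ m ⊆ (σ.erase m).sup id := by
  refine ⟨fun ⟨hσ, huniq⟩ => ⟨hσ, fun m hm hle => ?_, fun m hm hle => ?_⟩,
    fun ⟨hσ, hclosed, hirr⟩ => ⟨hσ, fun τ hτ hsup => ?_⟩⟩
  · rw [← huniq (insert m σ) (insert_subset hm hσ) (by simpa [sup_insert] using hle)]
    exact mem_insert_self m σ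
  · have hsup : (σ.erase m).sup id = σ.sup id := by
      conv_rhs => rw [← insert_erase hm]
      simpa [sup_insert] using hle
    have herase := huniq _ ((erase_subset m σ).trans hσ) hsup
    exact notMem_erase m σ (herase.symm ▸ hm)
  · have hτσ : τ ⊆ σ := fun m hm => hclosed m (hτ hm) (hsup ▸ le_sup (f := id) hm)
    by_contra hne
    obtain ⟨m, hmσ, hmτ⟩ := exists_of_ssubset (hτσ.ssubset_of_ne hne)
    refine hirr m hmσ ((le_sup (f := id) hmσ).trans ?_)
    rw [← hsup]
    exact sup_mono (subset_erase.2 ⟨hτσ, hmτ⟩)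

theorem scarfFace_image_iff_s13 {g : ι → Finset α} (hg : Function.Injective g) {I S : Finset ι} :
    ScarfFace (I.image g) (S.image g) ↔ S ⊆ I ∧ (∀ i ∈ I, g i ⊆ S.sup g → i ∈ S) ∧
      ∀ i ∈ S, ¬ g i ⊆ (S.erase i).sup g := by
  simp [scarfFace_iff, image_subset_image_iff hg, ← image_erase hg, sup_image, hg.eq_iff]

end Scarf

def IsPolygonFace (n : ℕ) (S : Finset ℕ) : Prop :=
  S = ∅ ∨ (∃ i, 1 ≤ i ∧ i ≤ n ∧ S = {i}) ∨ (∃ i, 1 ≤ i ∧ i + 1 ≤ n ∧ S = {i, i + 1}) ∨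
    S = {1, n}

namespace PathIdeal

def gen (t i : ℕ) : Finset ℕ := Icc i (i + t - 1)

variable {t n : ℕ} {S : Finset ℕ}

theorem mem_gen {x i : ℕ} : x ∈ gen t i ↔ i ≤ x ∧ x ≤ i + t - 1 := mem_Icc

theorem left_mem_gen (ht : 1 ≤ t) (i : ℕ) : i ∈ gen t i := mem_gen.2 ⟨le_rfl, by omega⟩

theorem right_mem_gen (ht : 1 ≤ t) (i : ℕ) : i + t - 1 ∈ gen t i := mem_gen.2 ⟨by omega, le_rfl⟩

theorem gen_injective (ht : 1 ≤ t) : Function.Injective (gen t) := by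
  intro i j h
  have hi := mem_gen.1 (h ▸ left_mem_gen ht i)
  have hj := mem_gen.1 (h.symm ▸ left_mem_gen ht j)
  omega

theorem eq_add_one_or_add_lt_of_scarfFace (ht : 1 ≤ t)
    (h : ScarfFace ((Icc 1 n).image (gen t)) (S.image (gen t))) {a b : ℕ}
    (ha : a ∈ S) (hb : b ∈ S) (hab : a < b) : b = a + 1 ∨ a + t < b := by
  obtain ⟨hS, hclosed, hirr⟩ := (scarfFace_image_iff_s13 (gen_injective ht)).1 h
  by_contra! hgap
  have hcover : gen t (a + 1) ⊆ gen t a ∪ gen t b := fun x hx => by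
    simp only [mem_union, mem_gen] at hx ⊢
    omega
  have hbI := mem_Icc.1 (hS hb)
  by_cases hmid : a + 1 ∈ S
  · refine hirr _ hmid (hcover.trans (union_subset (le_sup ?_) (le_sup ?_)))
    · exact mem_erase.2 ⟨by omega, ha⟩
    · exact mem_erase.2 ⟨by omega, hb⟩
  · refine hmid (hclosed _ (mem_Icc.2 ⟨by omega, by omega⟩) ?_)
    exact hcover.trans (union_subset (le_sup ha) (le_sup hb))

theorem isPolygonFace_of_forall_eq_add_one_or_add_lt (ht : 2 ≤ t) (hS : S ⊆ Icc 1 (t + 2))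
    (hgap : ∀ a ∈ S, ∀ b ∈ S, a < b → b = a + 1 ∨ a + t < b) : IsPolygonFace (t + 2) S := by
  have hbd : ∀ a ∈ S, 1 ≤ a ∧ a ≤ t + 2 := fun a ha => mem_Icc.1 (hS ha)
  have hcard : #S ≤ 2 := by
    by_contra! h3
    obtain ⟨a, b, c, ha, hb, hc, hab, hac, hbc⟩ := two_lt_card_iff.1 h3
    have := hgap a ha b hb; have := hgap b hb a ha; have := hgap a ha c hc
    have := hgap c hc a ha; have := hgap b hb c hc; have := hgap c hc b hb
    have := hbd a ha; have := hbd b hb; have := hbd c hc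
    omega
  have hpair (a b : ℕ) (hab : a < b) (hS : S = {a, b}) : IsPolygonFace (t + 2) S := by
    subst hS
    have ha := hbd a (by simp)
    have hb := hbd b (by simp)
    rcases hgap a (by simp) b (by simp) hab with rfl | hlt
    · exact Or.inr (Or.inr (Or.inl ⟨a, ha.1, hb.2, rfl⟩))
    · obtain ⟨rfl, rfl⟩ : a = 1 ∧ b = t + 2 := by omega
      exact Or.inr (Or.inr (Or.inr rfl))
  interval_cases h : #S
  · exact Or.inl (card_eq_zero.1 h)
  · obtain ⟨i, rfl⟩ := card_eq_one.1 h
    obtain ⟨hi1, hi2⟩ := hbd i (mem_singleton_self i)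
    exact Or.inr (Or.inl ⟨i, hi1, hi2, rfl⟩)
  · obtain ⟨a, b, hne, hS⟩ := card_eq_two.1 h
    rcases hne.lt_or_gt with hab | hab
    · exact hpair a b hab hS
    · exact hpair b a hab (hS.trans (pair_comm a b))

theorem scarfFace_image_gen_of_endpoints (ht : 1 ≤ t) (hS : S ⊆ Icc 1 n)
    (hclosed : ∀ j ∈ Icc 1 n, j ∈ S.sup (gen t) → j + t - 1 ∈ S.sup (gen t) → j ∈ S)
    (hirr : ∀ j ∈ S, j ∈ (S.erase j).sup (gen t) → j + t - 1 ∉ (S.erase j).sup (gen t)) :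
    ScarfFace ((Icc 1 n).image (gen t)) (S.image (gen t)) :=
  (scarfFace_image_iff_s13 (gen_injective ht)).2 ⟨hS,
    fun j hj hsub => hclosed j hj (hsub (left_mem_gen ht j)) (hsub (right_mem_gen ht j)),
    fun j hj hsub => hirr j hj (hsub (left_mem_gen ht j)) (hsub (right_mem_gen ht j))⟩

theorem scarfFace_image_gen_first_last (ht : 2 ≤ t) :
    ScarfFace ((Icc 1 (t + 2)).image (gen t)) (({1, t + 2} : Finset ℕ).image (gen t)) := by
  refine (scarfFace_image_iff_s13 (gen_injective (by omega))).2 ⟨?_, fun j hj hsub => ?_, ?_⟩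
  · simp [insert_subset_iff]
  · -- every other generator contains `t + 1`, the one variable missing from `m_1 m_{t+2}`
    by_contra hj'
    have hmid := hsub (mem_gen.2 (show j ≤ t + 1 ∧ t + 1 ≤ j + t - 1 by simp at hj hj'; omega))
    simp [sup_insert, mem_gen] at hmid
  · intro j hj hsub
    have h1 := hsub (left_mem_gen (by omega) j)
    have h2 := hsub (right_mem_gen (by omega) j)
    simp [mem_gen] at hj h1 h2
    omega

theorem scarfFace_image_gen_of_isPolygonFace (ht : 2 ≤ t) (hS : IsPolygonFace (t + 2) S) :
    ScarfFace ((Icc 1 (t + 2)).image (gen t)) (S.image (gen t)) := by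
  rcases hS with rfl | ⟨i, hi1, hi2, rfl⟩ | ⟨i, hi1, hi2, rfl⟩ | rfl <;> first
    | exact scarfFace_image_gen_first_last ht
    | refine scarfFace_image_gen_of_endpoints (by omega) ?_ ?_ ?_ <;>
        simp [subset_iff, mem_gen, sup_insert] <;> grind

theorem scarfFace_image_gen_iff (ht : 2 ≤ t) :
    ScarfFace ((Icc 1 (t + 2)).image (gen t)) (S.image (gen t)) ↔ IsPolygonFace (t + 2) S :=
  ⟨fun h => isPolygonFace_of_forall_eq_add_one_or_add_lt ht
      ((scarfFace_image_iff_s13 (gen_injective (by omega))).1 h).1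
      fun _ ha _ hb => eq_add_one_or_add_lt_of_scarfFace (by omega) h ha hb,
    scarfFace_image_gen_of_isPolygonFace ht⟩

end PathIdeal

/-- For `t ≥ 3`, the Scarf complex of the `t`-connected ideal of the path
`P_{2t+1}`, with generators `m_i = x_i ⋯ x_{i+t-1}` for `1 ≤ i ≤ t+2` (identified with the
intervals `[i, i+t-1]`), is the boundary of a `(t+2)`-gon: its faces are exactly the empty set,
the singletons, the consecutive pairs `{m_i, m_{i+1}}` for `1 ≤ i ≤ t+1`, and the pair
`{m_1, m_{t+2}}`. -/
theorem scarf_connected_ideal_path_2t_plus_one (t : ℕ) (ht : 3 ≤ t)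
    (M : Finset (Finset ℕ))
    (hM : M = (Finset.Icc 1 (t + 2)).image (fun i => Finset.Icc i (i + t - 1)))
    (σ : Finset (Finset ℕ)) (hσ : σ ⊆ M) :
    ScarfFace M σ ↔
      (σ = ∅ ∨
        (∃ i, 1 ≤ i ∧ i ≤ t + 2 ∧ σ = {Finset.Icc i (i + t - 1)}) ∨
        (∃ i, 1 ≤ i ∧ i + 1 ≤ t + 2 ∧
          σ = {Finset.Icc i (i + t - 1), Finset.Icc (i + 1) (i + t)}) ∨
        σ = {Finset.Icc 1 t, Finset.Icc (t + 2) (2 * t + 1)}) := by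
  rw [show (fun i => Icc i (i + t - 1)) = PathIdeal.gen t from rfl] at hM
  subst hM
  obtain ⟨S, -, rfl⟩ := subset_image_iff.1 hσ
  have hsingle (i : ℕ) :
      ({Icc i (i + t - 1)} : Finset (Finset ℕ)) = ({i} : Finset ℕ).image (PathIdeal.gen t) :=
    (image_singleton _ _).symm
  have hpair (i : ℕ) : ({Icc i (i + t - 1), Icc (i + 1) (i + t)} : Finset (Finset ℕ)) =
      ({i, i + 1} : Finset ℕ).image (PathIdeal.gen t) := by
    simp [PathIdeal.gen]
  have hends : ({Icc 1 t, Icc (t + 2) (2 * t + 1)} : Finset (Finset ℕ)) =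
      ({1, t + 2} : Finset ℕ).image (PathIdeal.gen t) := by
    simp only [image_insert, image_singleton, PathIdeal.gen]
    congr 3 <;> omega
  have hinj := image_injective (PathIdeal.gen_injective (t := t) (by omega))
  rw [PathIdeal.scarfFace_image_gen_iff (by omega), IsPolygonFace]
  simp only [hsingle, hpair, hends, image_eq_empty, hinj.eq_iff]
end

section
/- Let I ⊆ S and I' ⊆ S' = S[x'] be squarefree monomial ideals as follows: I is minimally generated by M = {m_1,…,m_p, x n_1,…,x n_q} where x is a distinguished variable of S and the m_i, n_j are distinct monomials not divisible by x; I' is minimally generated by M' = M ∪ {x' n_1,…,x' n_q}. Then for any subset N ⊆ M, N is a face of the Scarf complex of I if and only if N is a face of the Scarf complex of I'. -/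
namespace ScarfFace

variable {α : Type*} [DecidableEq α] {M M' σ : Finset (Finset α)}

theorem restrict (h : ScarfFace M' σ) (hσ : σ ⊆ M) (hMM' : M ⊆ M') : ScarfFace M σ :=
  ⟨hσ, fun τ hτ => h.2 τ (hτ.trans hMM')⟩

theorem extend (h : ScarfFace M σ) (hMM' : M ⊆ M')
    (hnew : ∀ m ∈ M', m ⊆ σ.sup id → m ∈ M) : ScarfFace M' σ :=
  ⟨h.1.trans hMM', fun τ hτ hsup =>
    h.2 τ (fun t ht => hnew t (hτ ht) (hsup ▸ Finset.le_sup (f := id) ht)) hsup⟩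

theorem iff_of_mem_of_not_mem_extend {v : α} (hMM' : M ⊆ M') (hvM : ∀ m ∈ M, v ∉ m)
    (hvM' : ∀ m ∈ M', m ∉ M → v ∈ m) (hσ : σ ⊆ M) : ScarfFace M σ ↔ ScarfFace M' σ := by
  refine ⟨fun h => h.extend hMM' fun m hm hmσ => ?_, fun h => h.restrict hσ hMM'⟩
  by_contra hmM
  obtain ⟨s, hs, hvs⟩ := Finset.mem_sup.mp (hmσ (hvM' m hm hmM))
  exact hvM s (hσ hs) hvs

end ScarfFace

theorem scarf_face_iff_after_leaf_addition_general {α : Type*} [DecidableEq α]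
    (x x' : α) (hxx' : x ≠ x') (A B : Finset (Finset α))
    (hA : ∀ m ∈ A, x ∉ m ∧ x' ∉ m) (hB : ∀ n ∈ B, x ∉ n ∧ x' ∉ n)
    (M M' : Finset (Finset α))
    (hM : M = A ∪ B.image (insert x)) (hM' : M' = M ∪ B.image (insert x'))
    (N : Finset (Finset α)) (hN : N ⊆ M) :
    ScarfFace M N ↔ ScarfFace M' N := by
  have hx'M : ∀ m ∈ M, x' ∉ m := by
    simp only [hM, Finset.mem_union, Finset.mem_image]
    rintro m (hm | ⟨n, hn, rfl⟩)
    · exact (hA m hm).2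
    · simpa [Ne.symm hxx'] using (hB n hn).2
  have hx'M' : ∀ m ∈ M', m ∉ M → x' ∈ m := by
    simp only [hM', Finset.mem_union, Finset.mem_image]
    rintro m (hm | ⟨n, -, rfl⟩) hmM
    · exact absurd hm hmM
    · exact Finset.mem_insert_self x' n
  exact ScarfFace.iff_of_mem_of_not_mem_extend (hM' ▸ Finset.subset_union_left) hx'M hx'M' hN

/-- leaf-addition setup.  Variables of `S` are elements of `α` other than
`x'`; `S' = S[x']`.  `I` is minimally generated by `M = A ∪ {x·n : n ∈ B}` where the monomials
in `A` and `B` are pairwise distinct and not divisible by `x` (nor by the new variable `x'`),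
and `I'` is minimally generated by `M' = M ∪ {x'·n : n ∈ B}`.  Then a subset `N ⊆ M` is a face
of `Scarf(I)` iff it is a face of `Scarf(I')`. -/
theorem scarf_face_iff_after_leaf_addition {α : Type*} [DecidableEq α]
    (x x' : α) (hxx' : x ≠ x') (A B : Finset (Finset α)) (hAB : Disjoint A B)
    (hA : ∀ m ∈ A, x ∉ m ∧ x' ∉ m) (hB : ∀ n ∈ B, x ∉ n ∧ x' ∉ n)
    (M M' : Finset (Finset α))
    (hM : M = A ∪ B.image (insert x)) (hM' : M' = M ∪ B.image (insert x'))
    (hmin : ∀ a ∈ M', ∀ b ∈ M', a ⊆ b → a = b)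
    (N : Finset (Finset α)) (hN : N ⊆ M) :
    ScarfFace M N ↔ ScarfFace M' N :=
  scarf_face_iff_after_leaf_addition_general x x' hxx' A B hA hB M M' hM hM' N hN
end

section
/- With I ⊆ S and I' ⊆ S' = S[x'] as in the leaf-addition setup (I minimally generated by M = {m_1,…,m_p, x n_1,…,x n_q} with m_i, n_j not divisible by x, and I' minimally generated by M' = M ∪ {x' n_1,…,x' n_q}): if N' ⊆ M' is a face of the Scarf complex of I', then the subset of M obtained from N' by substituting x' ↦ x is a face of the Scarf complex of I. -/
/-- The substitution `x' ↦ x` on squarefree monomials (identified with their variable sets). -/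
def substVar {α : Type*} [DecidableEq α] (x x' : α) (s : Finset α) : Finset α :=
  if x' ∈ s then insert x (s.erase x') else s

lemma substVar_fix {α : Type*} [DecidableEq α] {x x' : α} {s : Finset α} (h : x' ∉ s) :
    substVar x x' s = s := by simp [substVar, h]

lemma substVar_insert {α : Type*} [DecidableEq α] {x x' : α} {n : Finset α}
    (hn : x' ∉ n) : substVar x x' (insert x' n) = insert x n := by
  rw [substVar, if_pos (Finset.mem_insert_self _ _), Finset.erase_insert hn]

lemma sup_image_substVar {α : Type*} [DecidableEq α] (x x' : α) (S : Finset (Finset α)) :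
    (S.image (substVar x x')).sup id = substVar x x' (S.sup id) := by
  ext y
  simp only [Finset.mem_sup, Finset.mem_image, id]
  constructor
  · rintro ⟨t, ⟨s, hs, rfl⟩, hyt⟩
    by_cases hx's : x' ∈ s
    · have hx'S : x' ∈ S.sup id := Finset.mem_sup.mpr ⟨s, hs, hx's⟩
      rw [substVar, if_pos hx'S]
      rw [substVar, if_pos hx's] at hyt
      rcases Finset.mem_insert.mp hyt with rfl | hy
      · exact Finset.mem_insert_self _ _
      · exact Finset.mem_insert_of_mem (Finset.mem_erase.mpr
          ⟨(Finset.mem_erase.mp hy).1, Finset.mem_sup.mpr ⟨s, hs, (Finset.mem_erase.mp hy).2⟩⟩)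
    · rw [substVar_fix hx's] at hyt
      by_cases hx'S : x' ∈ S.sup id
      · rw [substVar, if_pos hx'S]
        exact Finset.mem_insert_of_mem (Finset.mem_erase.mpr
          ⟨fun h => hx's (h ▸ hyt), Finset.mem_sup.mpr ⟨s, hs, hyt⟩⟩)
      · rw [substVar_fix hx'S]; exact Finset.mem_sup.mpr ⟨s, hs, hyt⟩
  · intro hy
    by_cases hx'S : x' ∈ S.sup id
    · rw [substVar, if_pos hx'S] at hy
      rcases Finset.mem_insert.mp hy with hyx | hy
      · obtain ⟨s, hs, hx's⟩ := Finset.mem_sup.mp hx'S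
        refine ⟨substVar x x' s, ⟨s, hs, rfl⟩, ?_⟩
        rw [hyx, substVar, if_pos (show x' ∈ s from hx's)]; exact Finset.mem_insert_self _ _
      · obtain ⟨hyne, hyS⟩ := Finset.mem_erase.mp hy
        obtain ⟨s, hs, hys⟩ := Finset.mem_sup.mp hyS
        refine ⟨substVar x x' s, ⟨s, hs, rfl⟩, ?_⟩
        by_cases hx's : x' ∈ s
        · rw [substVar, if_pos hx's]
          exact Finset.mem_insert_of_mem (Finset.mem_erase.mpr ⟨hyne, hys⟩)
        · rw [substVar_fix hx's]; exact hys
    · rw [substVar_fix hx'S] at hy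
      obtain ⟨s, hs, hys⟩ := Finset.mem_sup.mp hy
      have hx's : x' ∉ s := fun h => hx'S (Finset.mem_sup.mpr ⟨s, hs, h⟩)
      exact ⟨substVar x x' s, ⟨s, hs, rfl⟩, by rw [substVar_fix hx's]; exact hys⟩

/-- leaf-addition setup.  With `I` minimally generated by
`M = A ∪ {x·n : n ∈ B}` and `I'` minimally generated by `M' = M ∪ {x'·n : n ∈ B}`:
if `N' ⊆ M'` is a face of `Scarf(I')`, then its image under the substitution `x' ↦ x` is a face
of `Scarf(I)`. -/
theorem scarf_face_subst_of_leaf_addition {α : Type*} [DecidableEq α]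
    (x x' : α) (hxx' : x ≠ x') (A B : Finset (Finset α)) (hAB : Disjoint A B)
    (hA : ∀ m ∈ A, x ∉ m ∧ x' ∉ m) (hB : ∀ n ∈ B, x ∉ n ∧ x' ∉ n)
    (M M' : Finset (Finset α))
    (hM : M = A ∪ B.image (insert x)) (hM' : M' = M ∪ B.image (insert x'))
    (hmin : ∀ a ∈ M', ∀ b ∈ M', a ⊆ b → a = b)
    (N' : Finset (Finset α)) (hN' : ScarfFace M' N') :
    ScarfFace M (N'.image (substVar x x')) := by
  have hMM' : M ⊆ M' := hM' ▸ Finset.subset_union_left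
  -- elements of M never contain x'
  have hMx' : ∀ s ∈ M, x' ∉ s := by
    intro s hs
    rw [hM] at hs
    rcases Finset.mem_union.mp hs with h | h
    · exact (hA s h).2
    · obtain ⟨n, hn, rfl⟩ := Finset.mem_image.mp h
      intro hx'
      rcases Finset.mem_insert.mp hx' with h1 | h1
      · exact hxx' h1.symm
      · exact (hB n hn).2 h1
  -- elements of M' containing x' come from B
  have hM'char : ∀ s ∈ M', x' ∈ s → ∃ n ∈ B, s = insert x' n := by
    intro s hs hx's
    rw [hM'] at hs
    rcases Finset.mem_union.mp hs with h | h
    · exact absurd hx's (hMx' s h)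
    · obtain ⟨n, hn, rfl⟩ := Finset.mem_image.mp h
      exact ⟨n, hn, rfl⟩
  -- elements of M' not containing x' lie in M
  have hM'M : ∀ s ∈ M', x' ∉ s → s ∈ M := by
    intro s hs hx's
    rw [hM'] at hs
    rcases Finset.mem_union.mp hs with h | h
    · exact h
    · obtain ⟨n, hn, rfl⟩ := Finset.mem_image.mp h
      exact absurd (Finset.mem_insert_self _ _) hx's
  -- elements of M containing x come from B
  have hMxchar : ∀ s ∈ M, x ∈ s → ∃ n ∈ B, s = insert x n := by
    intro s hs hxs
    rw [hM] at hs
    rcases Finset.mem_union.mp hs with h | h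
    · exact absurd hxs (hA s h).1
    · obtain ⟨n, hn, rfl⟩ := Finset.mem_image.mp h
      exact ⟨n, hn, rfl⟩
  have hNM : N'.image (substVar x x') ⊆ M := by
    intro t ht
    obtain ⟨s, hs, rfl⟩ := Finset.mem_image.mp ht
    have hsM' : s ∈ M' := hN'.1 hs
    by_cases hx's : x' ∈ s
    · obtain ⟨n, hn, rfl⟩ := hM'char s hsM' hx's
      rw [substVar_insert (hB n hn).2, hM]
      exact Finset.mem_union_right _ (Finset.mem_image.mpr ⟨n, hn, rfl⟩)
    · rw [substVar_fix hx's]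
      exact hM'M s hsM' hx's
  refine ⟨hNM, ?_⟩
  intro τ hτM hsup
  have hL : (N'.image (substVar x x')).sup id = substVar x x' (N'.sup id) :=
    sup_image_substVar x x' N'
  by_cases hx'L : x' ∈ N'.sup id
  · -- x' occurs in lcm(N')
    have hLdef : (N'.image (substVar x x')).sup id = insert x ((N'.sup id).erase x') := by
      rw [hL, substVar, if_pos hx'L]
    have hxτ : x ∈ τ.sup id := by
      rw [hsup, hLdef]; exact Finset.mem_insert_self _ _
    obtain ⟨s0, hs0, hxs0⟩ := Finset.mem_sup.mp hxτ
    obtain ⟨n0, hn0B, rfl⟩ := hMxchar s0 (hτM hs0) hxs0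
    -- τ's elements are fixed by the substitution
    have hτfix : τ.image (substVar x x') = τ := by
      rw [show τ.image (substVar x x') = τ.image id from
        Finset.image_congr fun s hs => substVar_fix (hMx' s (hτM hs)), Finset.image_id]
    by_cases hxL' : x ∈ N'.sup id
    · -- x also occurs in lcm(N'): lift τ by adding x'·n₀
      have hτ'M' : insert (insert x' n0) τ ⊆ M' := by
        refine Finset.insert_subset ?_ (hτM.trans hMM')
        rw [hM']
        exact Finset.mem_union_right _ (Finset.mem_image.mpr ⟨n0, hn0B, rfl⟩)
      have hn0sup : n0 ⊆ τ.sup id :=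
        (Finset.subset_insert x n0).trans (Finset.le_sup (f := id) hs0)
      have hsupτ' : (insert (insert x' n0) τ).sup id = N'.sup id := by
        rw [Finset.sup_insert, Finset.sup_eq_union]
        ext y
        simp only [Finset.mem_union, id]
        constructor
        · rintro (hy | hy)
          · rcases Finset.mem_insert.mp hy with rfl | hy
            · exact hx'L
            · have : y ∈ τ.sup id := hn0sup hy
              rw [hsup, hLdef] at this
              rcases Finset.mem_insert.mp this with rfl | h
              · exact hxL'
              · exact Finset.mem_of_mem_erase h
          · rw [hsup, hLdef] at hy
            rcases Finset.mem_insert.mp hy with rfl | h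
            · exact hxL'
            · exact Finset.mem_of_mem_erase h
        · intro hy
          by_cases hyx' : y = x'
          · exact Or.inl (hyx' ▸ Finset.mem_insert_self _ _)
          · refine Or.inr ?_
            rw [hsup, hLdef]
            exact Finset.mem_insert_of_mem (Finset.mem_erase.mpr ⟨hyx', hy⟩)
      have heq := hN'.2 _ hτ'M' hsupτ'
      rw [← heq, Finset.image_insert, substVar_insert (hB n0 hn0B).2, hτfix,
        Finset.insert_eq_self.mpr hs0]
    · -- x does not occur in lcm(N'): lift τ by swapping x ↦ x'
      have hτ'M' : τ.image (substVar x' x) ⊆ M' := by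
        intro t ht
        obtain ⟨s, hs, rfl⟩ := Finset.mem_image.mp ht
        by_cases hxs : x ∈ s
        · obtain ⟨n, hn, rfl⟩ := hMxchar s (hτM hs) hxs
          rw [substVar_insert (hB n hn).1, hM']
          exact Finset.mem_union_right _ (Finset.mem_image.mpr ⟨n, hn, rfl⟩)
        · rw [substVar_fix hxs]
          exact hMM' (hτM hs)
      have hsupτ' : (τ.image (substVar x' x)).sup id = N'.sup id := by
        rw [sup_image_substVar x' x, hsup, hLdef, substVar,
          if_pos (Finset.mem_insert_self _ _),
          Finset.erase_insert (fun h => hxL' (Finset.mem_of_mem_erase h)),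
          Finset.insert_erase hx'L]
      have heq := hN'.2 _ hτ'M' hsupτ'
      rw [← heq, Finset.image_image]
      have : ∀ s ∈ τ, (substVar x x' ∘ substVar x' x) s = s := by
        intro s hs
        by_cases hxs : x ∈ s
        · obtain ⟨n, hn, rfl⟩ := hMxchar s (hτM hs) hxs
          simp only [Function.comp_apply, substVar_insert (hB n hn).1,
            substVar_insert (hB n hn).2]
        · simp only [Function.comp_apply, substVar_fix hxs,
            substVar_fix (hMx' s (hτM hs))]
      rw [show τ.image (substVar x x' ∘ substVar x' x) = τ.image id from
        Finset.image_congr this, Finset.image_id]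
  · -- x' does not occur in lcm(N'): N' ⊆ M and the image is N' itself
    have hfix : ∀ s ∈ N', substVar x x' s = s := fun s hs =>
      substVar_fix fun h => hx'L (Finset.mem_sup.mpr ⟨s, hs, h⟩)
    have hNN' : N'.image (substVar x x') = N' := by
      rw [show N'.image (substVar x x') = N'.image id from Finset.image_congr hfix,
        Finset.image_id]
    rw [hNN']
    exact hN'.2 τ (hτM.trans hMM') (by rw [hsup, hNN'])
end

section
/- With I and I' as in the leaf-addition setup, assume furthermore that the star neighborhoods star(x n_i, Scarf(I)) and star(x n_j, Scarf(I)) are disjoint for all i ≠ j. Then for any i ≠ j, none of the sets {x n_i, x n_j}, {x' n_i, x' n_j}, {x n_i, x' n_j} is a face of Scarf(I'). -/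
/-!
A Scarf face of `M'` all of whose elements lie in `M ⊆ M'` is a Scarf face of `M`; this rules out
`{x n_i, x n_j}`. The transposition `x ↔ x'` permutes the generators of `I'` and commutes with lcm,
so it maps Scarf faces of `I'` to Scarf faces, carrying `{x' n_i, x' n_j}` to `{x n_i, x n_j}`.
Finally `x n_j` divides `lcm(x n_i, x' n_j)`, and a generator dividing the lcm of a Scarf face
belongs to it, which rules out `{x n_i, x' n_j}`.
-/

namespace ScarfFace

variable {α β : Type*} [DecidableEq α] [DecidableEq β] {M N σ : Finset (Finset α)}

theorem of_superset (hMN : M ⊆ N) (hσM : σ ⊆ M) (h : ScarfFace N σ) : ScarfFace M σ :=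
  ⟨hσM, fun τ hτM => h.2 τ (hτM.trans hMN)⟩

theorem mem_of_subset_sup (h : ScarfFace M σ) {m : Finset α} (hm : m ∈ M)
    (hmσ : m ⊆ σ.sup id) : m ∈ σ := by
  have hsup : (insert m σ).sup id = σ.sup id := by
    rw [Finset.sup_insert, id, sup_eq_right.mpr hmσ]
  exact h.2 (insert m σ) (Finset.insert_subset hm h.1) hsup ▸ Finset.mem_insert_self m σ

theorem image_finset_image {g : α → β} (hg : Function.Injective g) (h : ScarfFace M σ) :
    ScarfFace (M.image (Finset.image g)) (σ.image (Finset.image g)) := by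
  have hsup : ∀ τ : Finset (Finset α), (τ.image (Finset.image g)).sup id = (τ.sup id).image g :=
    fun τ => by rw [Finset.sup_image, Finset.sup_eq_biUnion, Finset.sup_eq_biUnion,
      Finset.biUnion_image]; rfl
  refine ⟨Finset.image_subset_image h.1, fun τ hτ hτσ => ?_⟩
  obtain ⟨τ₀, hτ₀M, rfl⟩ := Finset.subset_image_iff.mp hτ
  rw [hsup, hsup] at hτσ
  rw [h.2 τ₀ hτ₀M (Finset.image_injective hg hτσ)]

end ScarfFace

section LeafAddition

variable {α : Type*} [DecidableEq α] {x x' : α}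

theorem Finset.image_swap_of_notMem {n : Finset α} (hx : x ∉ n) (hx' : x' ∉ n) :
    n.image (Equiv.swap x x') = n :=
  (Finset.image_congr fun _ ha =>
    Equiv.swap_apply_of_ne_of_ne (ne_of_mem_of_not_mem ha hx) (ne_of_mem_of_not_mem ha hx')).trans
    Finset.image_id

theorem Finset.image_swap_insert_of_notMem {a b : α} {n : Finset α} (ha : a ∉ n) (hb : b ∉ n) :
    (insert a n).image (Equiv.swap a b) = insert b n := by
  rw [Finset.image_insert, Equiv.swap_apply_left, Finset.image_swap_of_notMem ha hb]

theorem image_image_swap_leafAddition {A B : Finset (Finset α)}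
    (hA : ∀ m ∈ A, x ∉ m ∧ x' ∉ m) (hB : ∀ n ∈ B, x ∉ n ∧ x' ∉ n) :
    (A ∪ B.image (insert x) ∪ B.image (insert x')).image (Finset.image (Equiv.swap x x')) =
      A ∪ B.image (insert x) ∪ B.image (insert x') := by
  have hA' : A.image (Finset.image (Equiv.swap x x')) = A :=
    (Finset.image_congr fun m hm => Finset.image_swap_of_notMem (hA m hm).1 (hA m hm).2).trans
      Finset.image_id
  have hBx : (B.image (insert x)).image (Finset.image (Equiv.swap x x')) = B.image (insert x') := by
    rw [Finset.image_image]
    exact Finset.image_congr fun n hn =>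
      Finset.image_swap_insert_of_notMem (hB n hn).1 (hB n hn).2
  have hBx' : (B.image (insert x')).image (Finset.image (Equiv.swap x x')) = B.image (insert x) := by
    rw [Finset.image_image, Equiv.swap_comm]
    exact Finset.image_congr fun n hn =>
      Finset.image_swap_insert_of_notMem (hB n hn).2 (hB n hn).1
  rw [Finset.image_union, Finset.image_union, hA', hBx, hBx', Finset.union_right_comm]

end LeafAddition

theorem forbidden_pairs_after_leaf_addition_general {α : Type*} [DecidableEq α]
    (x x' : α) (hxx' : x ≠ x') (A B : Finset (Finset α))
    (hA : ∀ m ∈ A, x ∉ m ∧ x' ∉ m) (hB : ∀ n ∈ B, x ∉ n ∧ x' ∉ n)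
    (M M' : Finset (Finset α))
    (hM : M = A ∪ B.image (insert x)) (hM' : M' = M ∪ B.image (insert x'))
    (hdisj : ∀ n₁ ∈ B, ∀ n₂ ∈ B, n₁ ≠ n₂ → ¬ ScarfFace M {insert x n₁, insert x n₂}) :
    ∀ n₁ ∈ B, ∀ n₂ ∈ B, n₁ ≠ n₂ →
      ¬ ScarfFace M' {insert x n₁, insert x n₂} ∧
      ¬ ScarfFace M' {insert x' n₁, insert x' n₂} ∧
      ¬ ScarfFace M' {insert x n₁, insert x' n₂} := by
  intro n₁ hn₁ n₂ hn₂ hne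
  have hxn₁ : insert x n₁ ∈ M := hM ▸ Finset.mem_union_right _ (Finset.mem_image_of_mem _ hn₁)
  have hxn₂ : insert x n₂ ∈ M := hM ▸ Finset.mem_union_right _ (Finset.mem_image_of_mem _ hn₂)
  have hMM' : M ⊆ M' := hM' ▸ Finset.subset_union_left
  have hxx : ¬ ScarfFace M' {insert x n₁, insert x n₂} := fun h =>
    hdisj n₁ hn₁ n₂ hn₂ hne (h.of_superset hMM' (Finset.insert_subset hxn₁ (by simpa using hxn₂)))
  refine ⟨hxx, fun h => hxx ?_, fun h => ?_⟩
  · have hswap := h.image_finset_image (Equiv.swap x x').injective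
    rwa [hM', hM, image_image_swap_leafAddition hA hB, ← hM, ← hM', Finset.image_insert,
      Finset.image_singleton, Equiv.swap_comm, Finset.image_swap_insert_of_notMem (hB n₁ hn₁).2
      (hB n₁ hn₁).1, Finset.image_swap_insert_of_notMem (hB n₂ hn₂).2 (hB n₂ hn₂).1] at hswap
  · have hsub : insert x n₂ ⊆ ({insert x n₁, insert x' n₂} : Finset (Finset α)).sup id := by
      rw [Finset.sup_insert, Finset.sup_singleton]
      exact Finset.insert_subset (Finset.mem_union_left _ (Finset.mem_insert_self x n₁))
        ((Finset.subset_insert x' n₂).trans Finset.subset_union_right)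
    rcases Finset.mem_insert.mp (h.mem_of_subset_sup (hMM' hxn₂) hsub) with heq | heq
    · refine hne ?_
      rw [← Finset.erase_insert (hB n₁ hn₁).1, ← heq, Finset.erase_insert (hB n₂ hn₂).1]
    · exact hxx' ((Finset.insert_inj (hB n₂ hn₂).1).mp (Finset.mem_singleton.mp heq))

/-- leaf-addition setup.  Assume the star neighborhoods
`star(x·n_i, Scarf(I))` are pairwise disjoint, interpreted (as in the source) as: for `i ≠ j`
the pair `{x·n_i, x·n_j}` is not a face of `Scarf(I)`.  Then for `i ≠ j` none of the pairs
`{x·n_i, x·n_j}`, `{x'·n_i, x'·n_j}`, `{x·n_i, x'·n_j}` is a face of `Scarf(I')`. -/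
theorem forbidden_pairs_after_leaf_addition {α : Type*} [DecidableEq α]
    (x x' : α) (hxx' : x ≠ x') (A B : Finset (Finset α)) (hAB : Disjoint A B)
    (hA : ∀ m ∈ A, x ∉ m ∧ x' ∉ m) (hB : ∀ n ∈ B, x ∉ n ∧ x' ∉ n)
    (M M' : Finset (Finset α))
    (hM : M = A ∪ B.image (insert x)) (hM' : M' = M ∪ B.image (insert x'))
    (hmin : ∀ a ∈ M', ∀ b ∈ M', a ⊆ b → a = b)
    (hdisj : ∀ n₁ ∈ B, ∀ n₂ ∈ B, n₁ ≠ n₂ → ¬ ScarfFace M {insert x n₁, insert x n₂}) :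
    ∀ n₁ ∈ B, ∀ n₂ ∈ B, n₁ ≠ n₂ →
      ¬ ScarfFace M' {insert x n₁, insert x n₂} ∧
      ¬ ScarfFace M' {insert x' n₁, insert x' n₂} ∧
      ¬ ScarfFace M' {insert x n₁, insert x' n₂} :=
  forbidden_pairs_after_leaf_addition_general x x' hxx' A B hA hB M M' hM hM' hdisj
end
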